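/- For positive integers a, b and 0 ≤ i ≤ m, the value r_{i,m}([a,b]) of the higher continued fraction at x = a + 1/b equals (∑_{j=0}^{i} ⟪a, i-j⟫ · ⟪b, m-j⟫) / ⟪b, m⟫, and consequently lim_{b→∞} r_{i,m}([a,b]) = ⟪a, i⟫ = r_{i,m}(a). -/

import Mathlib

open scoped BigOperators

/-- Generalized binomial coefficient `C(n,k)` for integer `n` and `k`, valued in `ℚ`:
`n(n-1)⋯(n-k+1)/k!` for `k ≥ 0`, and `0` for `k < 0`. -/
def ichoose (n : ℤ) (k : ℤ) : ℚ :=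
  if k < 0 then 0 else (∏ i ∈ Finset.range k.toNat, ((n : ℚ) - i)) / (k.toNat.factorial : ℚ)

/-- Generalized multichoose `⟪n, r⟫ = C(n + r - 1, r)`. -/
def imchoose (n : ℤ) (r : ℤ) : ℚ := ichoose (n + r - 1) r

/-- The `(m+1)×(m+1)` matrix `Λ_m(a)` whose (1-indexed) `(i,j)`-entry is `⟪a, m + 2 - i - j⟫`. -/
def Lam (m : ℕ) (a : ℤ) : Matrix (Fin (m+1)) (Fin (m+1)) ℚ :=
  fun i j => imchoose a ((m : ℤ) - (i : ℕ) - (j : ℕ))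

/-- The product `Λ_m(a₁) ⋯ Λ_m(aₙ)` for a continued fraction `[a₁, …, aₙ]`. -/
def CFmat (m : ℕ) (l : List ℤ) : Matrix (Fin (m+1)) (Fin (m+1)) ℚ :=
  (l.map (Lam m)).prod

/-- `r_{i,m}` of the continued fraction `l`: the `(m+1-i)`-th entry (1-indexed) of the first
column of the matrix product `Λ_m(a₁) ⋯ Λ_m(aₙ)`, divided by the bottom-left entry. -/
def rCF (m : ℕ) (l : List ℤ) (i : ℕ) : ℚ :=
  CFmat m l ⟨m - i, by omega⟩ ⟨0, by omega⟩ / CFmat m l ⟨m, by omega⟩ ⟨0, by omega⟩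

/-- The value of a continued fraction `[a₁, …, aₙ] = a₁ + 1/(a₂ + 1/(⋯))`. -/
def cfVal : List ℤ → ℚ
  | [] => 0
  | [a] => a
  | a :: l => a + 1 / cfVal l

lemma imchoose_neg (n r : ℤ) (h : r < 0) : imchoose n r = 0 := by
  simp [imchoose, ichoose, h]

lemma imchoose_zero (n : ℤ) : imchoose n 0 = 1 := by
  simp [imchoose, ichoose]

lemma imchoose_nat_eq (b r : ℕ) :
    imchoose (b:ℤ) (r:ℤ) = (∏ t ∈ Finset.range r, ((b:ℚ)+t)) / r.factorial := by
  rw [imchoose, ichoose, if_neg (by omega)]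
  have h2 : ((r:ℤ)).toNat = r := by omega
  rw [h2]
  congr 1
  rw [← Finset.prod_range_reflect]
  apply Finset.prod_congr rfl
  intro t ht
  simp only [Finset.mem_range] at ht
  have : ((r - 1 - t : ℕ) : ℚ) = (r:ℚ) - 1 - t := by
    have : ((r - 1 - t : ℕ) : ℤ) = (r:ℤ) - 1 - t := by omega
    exact_mod_cast congrArg (fun z : ℤ => (z : ℚ)) this
  rw [this]
  push_cast
  ring

lemma entry_pair (m i : ℕ) (him : i ≤ m) (a b : ℤ) :
    (Lam m a * Lam m b) ⟨m - i, by omega⟩ ⟨0, by omega⟩ =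
      ∑ j ∈ Finset.range (i+1), imchoose a ((i:ℤ)-j) * imchoose b ((m:ℤ)-j) := by
  rw [Matrix.mul_apply]
  have hmi : ((m - i : ℕ) : ℤ) = (m:ℤ) - i := by omega
  have key : ∀ j : Fin (m+1),
      Lam m a ⟨m - i, by omega⟩ j * Lam m b j ⟨0, by omega⟩ =
      (fun k : ℕ => imchoose a ((i:ℤ) - k) * imchoose b ((m:ℤ) - k)) (j : ℕ) := by
    intro j
    simp only [Lam, hmi]
    norm_num
  rw [Finset.sum_congr rfl (fun j _ => key j),
    Fin.sum_univ_eq_sum_range (fun k : ℕ => imchoose a ((i:ℤ) - k) * imchoose b ((m:ℤ) - k))]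
  symm
  apply Finset.sum_subset
  · exact Finset.range_subset_range.mpr (by omega)
  · intro k _ hk
    simp only [Finset.mem_range] at hk
    rw [imchoose_neg a _ (by omega), zero_mul]

lemma rCF_pair (m i : ℕ) (him : i ≤ m) (a b : ℤ) :
    rCF m [a, b] i =
      (∑ j ∈ Finset.range (i+1), imchoose a ((i:ℤ)-j) * imchoose b ((m:ℤ)-j)) /
        imchoose b (m:ℤ) := by
  have hpair : CFmat m [a, b] = Lam m a * Lam m b := by simp [CFmat]
  have h0 := entry_pair m 0 (Nat.zero_le m) a b
  have hi := entry_pair m i him a b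
  rw [rCF, hpair, hi]
  congr 1
  have : (⟨m, by omega⟩ : Fin (m+1)) = ⟨m - 0, by omega⟩ := rfl
  rw [this, h0]
  simp [imchoose_zero]

lemma rCF_single (m i : ℕ) (him : i ≤ m) (a : ℤ) :
    rCF m [a] i = imchoose a (i:ℤ) := by
  have h : CFmat m [a] = Lam m a := by simp [CFmat]
  have hmi : ((m - i : ℕ) : ℤ) = (m:ℤ) - i := by omega
  rw [rCF, h, Lam, Lam]
  simp only [hmi]
  norm_num
  rw [imchoose_zero]
  norm_num

lemma ratio_eq (m j b : ℕ) (hb : 0 < b) (hj : j ≤ m) :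
    imchoose (b:ℤ) ((m-j:ℕ):ℤ) / imchoose (b:ℤ) (m:ℤ) =
      ∏ t ∈ Finset.Ico (m-j) m, (((t:ℚ)+1) / ((b:ℚ)+t)) := by
  rw [imchoose_nat_eq, imchoose_nat_eq]
  have hbq : (1:ℚ) ≤ (b:ℚ) := by exact_mod_cast hb
  have hsplit : (∏ t ∈ Finset.range m, ((b:ℚ)+t)) =
      (∏ t ∈ Finset.range (m-j), ((b:ℚ)+t)) * ∏ t ∈ Finset.Ico (m-j) m, ((b:ℚ)+t) := by
    rw [Finset.range_eq_Ico, Finset.range_eq_Ico]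
    exact (Finset.prod_Ico_consecutive _ (Nat.zero_le (m-j)) (show m-j ≤ m by omega)).symm
  have hfac : (m.factorial : ℚ) =
      ((m-j).factorial : ℚ) * ∏ t ∈ Finset.Ico (m-j) m, ((t:ℚ)+1) := by
    have h1 : ∀ n : ℕ, (n.factorial : ℚ) = ∏ t ∈ Finset.range n, ((t:ℚ)+1) := by
      intro n
      induction n with
      | zero => simp
      | succ k ih => rw [Nat.factorial_succ, Finset.prod_range_succ, ← ih]; push_cast; ring
    rw [h1, h1, Finset.range_eq_Ico, Finset.range_eq_Ico]
    exact (Finset.prod_Ico_consecutive _ (Nat.zero_le (m-j)) (show m-j ≤ m by omega)).symm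
  have hP1 : (∏ t ∈ Finset.range (m-j), ((b:ℚ)+t)) ≠ 0 := by
    apply Finset.prod_ne_zero_iff.mpr
    intro t _
    positivity
  have hQ : (∏ t ∈ Finset.Ico (m-j) m, ((b:ℚ)+t)) ≠ 0 := by
    apply Finset.prod_ne_zero_iff.mpr
    intro t _
    positivity
  have hF1 : ((m-j).factorial : ℚ) ≠ 0 := by exact_mod_cast (m-j).factorial_ne_zero
  rw [hsplit, hfac, Finset.prod_div_distrib]
  field_simp


/-- For positive integers `a, b` and `0 ≤ i ≤ m`, the value `r_{i,m}([a,b])` of the higher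
continued fraction at `x = a + 1/b` equals
`(∑_{j=0}^{i} ⟪a, i-j⟫ ⬝ ⟪b, m-j⟫) / ⟪b, m⟫`, and consequently
`lim_{b→∞} r_{i,m}([a,b]) = ⟪a, i⟫ = r_{i,m}(a)`. -/
theorem rCF_two_term_formula (m i : ℕ) (a : ℕ) (ha : 0 < a) (him : i ≤ m) :
    (∀ b : ℕ, 0 < b →
      rCF m [(a : ℤ), (b : ℤ)] i =
        (∑ j ∈ Finset.range (i + 1),
            imchoose (a : ℤ) ((i : ℤ) - j) * imchoose (b : ℤ) ((m : ℤ) - j)) /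
          imchoose (b : ℤ) (m : ℤ)) ∧
    Filter.Tendsto (fun b : ℕ => rCF m [(a : ℤ), (b : ℤ)] i) Filter.atTop
      (nhds (imchoose (a : ℤ) (i : ℤ))) ∧
    imchoose (a : ℤ) (i : ℤ) = rCF m [(a : ℤ)] i := by
  refine ⟨fun b _ => rCF_pair m i him a b, ?_, (rCF_single m i him a).symm⟩
  -- the limit
  have hev : ∀ᶠ b : ℕ in Filter.atTop,
      rCF m [(a : ℤ), (b : ℤ)] i =
        ∑ j ∈ Finset.range (i+1), imchoose (a:ℤ) ((i:ℤ)-j) *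
          ∏ t ∈ Finset.Ico (m-j) m, (((t:ℚ)+1) / ((b:ℚ)+t)) := by
    filter_upwards [Filter.eventually_ge_atTop 1] with b hb
    rw [rCF_pair m i him a b, Finset.sum_div]
    apply Finset.sum_congr rfl
    intro j hj
    simp only [Finset.mem_range] at hj
    rw [mul_div_assoc]
    congr 1
    have : ((m:ℤ) - j) = ((m - j : ℕ) : ℤ) := by omega
    rw [this, ratio_eq m j b hb (by omega)]
  rw [Filter.tendsto_congr' hev]
  have : imchoose (a:ℤ) (i:ℤ) =
      ∑ j ∈ Finset.range (i+1), (if j = 0 then imchoose (a:ℤ) (i:ℤ) else 0) := by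
    simp
  rw [this]
  apply tendsto_finset_sum
  intro j hj
  simp only [Finset.mem_range] at hj
  by_cases hj0 : j = 0
  · subst hj0
    simp only [if_pos rfl, Nat.sub_zero, Finset.Ico_self, Finset.prod_empty, mul_one,
      Nat.cast_zero, sub_zero]
    exact tendsto_const_nhds
  · rw [if_neg hj0]
    have hlim : Filter.Tendsto
        (fun b : ℕ => ∏ t ∈ Finset.Ico (m-j) m, (((t:ℚ)+1) / ((b:ℚ)+t)))
        Filter.atTop (nhds 0) := by
      have h0 : (0:ℚ) = ∏ t ∈ Finset.Ico (m-j) m, (0:ℚ) := by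
        rw [Finset.prod_const]
        have hne : m - j < m := by omega
        rw [zero_pow]
        simp [Nat.card_Ico]
        omega
      rw [h0]
      apply tendsto_finset_prod
      intro t _
      apply Filter.Tendsto.div_atTop (tendsto_const_nhds)
      apply Filter.tendsto_atTop_add_const_right
      exact tendsto_natCast_atTop_atTop
    have := hlim.const_mul (imchoose (a:ℤ) ((i:ℤ)-j))
    simpa using this
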